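/- Generalized Cauchy formula: let g be a smooth complex-valued function on a neighborhood of z ∈ ℂ. Then for every integer n ≥ 1, lim_{ε→0} (1/(2π√−1)) ∫_{|v−z|=ε} g(v, v̄)/(v−z)ⁿ dv = (∂_z)^{n−1} g(z, z̄)/(n−1)!, where the circle is traversed counterclockwise and ∂_z is the holomorphic Wirtinger derivative. -/

import Mathlib

open scoped Real Topology
open Filter

/-- The Wirtinger derivative `∂_z` acting on functions `ℂ → ℂ`. -/
noncomputable def wderiv (f : ℂ → ℂ) : ℂ → ℂ := fun w =>
  (1 / 2) * (fderiv ℝ f w 1 - Complex.I * fderiv ℝ f w Complex.I)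

noncomputable def wcderiv (f : ℂ → ℂ) : ℂ → ℂ := fun w =>
  (1 / 2) * (fderiv ℝ f w 1 + Complex.I * fderiv ℝ f w Complex.I)

lemma fderiv_apply_eq' (f : ℂ → ℂ) (w : ℂ) (x y : ℝ) :
    fderiv ℝ f w ((x:ℂ) + (y:ℂ) * Complex.I)
      = wderiv f w * ((x:ℂ) + (y:ℂ) * Complex.I)
        + wcderiv f w * ((x:ℂ) - (y:ℂ) * Complex.I) := by
  have h1 : ((x:ℂ) + (y:ℂ) * Complex.I) = x • (1:ℂ) + y • Complex.I := by
    simp [Complex.real_smul]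
  rw [h1, map_add, map_smul, map_smul]
  simp only [wderiv, wcderiv, Complex.real_smul, smul_eq_mul, mul_one]
  ring_nf
  rw [Complex.I_sq]
  ring

lemma fderiv_apply_eq (f : ℂ → ℂ) (w u : ℂ) :
    fderiv ℝ f w u = wderiv f w * u + wcderiv f w * (starRingEnd ℂ u) := by
  obtain ⟨x, y, rfl⟩ : ∃ x y : ℝ, u = (x:ℂ) + (y:ℂ) * Complex.I :=
    ⟨u.re, u.im, (Complex.re_add_im u).symm⟩
  have h2 : (starRingEnd ℂ) ((x:ℂ) + (y:ℂ) * Complex.I) = (x:ℂ) - (y:ℂ) * Complex.I := by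
    simp [Complex.ext_iff]
  rw [h2]
  exact fderiv_apply_eq' f w x y

lemma wderiv_contDiff {f : ℂ → ℂ} (hf : ContDiff ℝ (⊤:ℕ∞) f) : ContDiff ℝ (⊤:ℕ∞) (wderiv f) := by
  have h := (hf.fderiv_right (m := (⊤:ℕ∞)) (by exact_mod_cast le_top))
  exact (contDiff_const.mul ((h.clm_apply contDiff_const).sub
    (contDiff_const.mul (h.clm_apply contDiff_const))))

lemma wderiv_iterate_contDiff {f : ℂ → ℂ} (hf : ContDiff ℝ (⊤:ℕ∞) f) (k : ℕ) :
    ContDiff ℝ (⊤:ℕ∞) (wderiv^[k] f) := by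
  induction k with
  | zero => exact hf
  | succ k ih => rw [Function.iterate_succ_apply']; exact wderiv_contDiff ih

lemma wcderiv_contDiff {f : ℂ → ℂ} (hf : ContDiff ℝ (⊤:ℕ∞) f) : ContDiff ℝ (⊤:ℕ∞) (wcderiv f) := by
  have h := (hf.fderiv_right (m := (⊤:ℕ∞)) (by exact_mod_cast le_top))
  exact (contDiff_const.mul ((h.clm_apply contDiff_const).add
    (contDiff_const.mul (h.clm_apply contDiff_const))))

lemma wderiv_congr {f g : ℂ → ℂ} {w : ℂ} (h : f =ᶠ[𝓝 w] g) :
    wderiv f =ᶠ[𝓝 w] wderiv g := by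
  filter_upwards [h.eventuallyEq_nhds] with x hx
  simp only [wderiv, hx.fderiv_eq]

lemma wderiv_iterate_congr {f g : ℂ → ℂ} {w : ℂ} (h : f =ᶠ[𝓝 w] g) (k : ℕ) :
    wderiv^[k] f w = wderiv^[k] g w := by
  induction k generalizing f g with
  | zero => exact h.self_of_nhds
  | succ k ih =>
    rw [Function.iterate_succ_apply, Function.iterate_succ_apply]
    exact ih (wderiv_congr h)

noncomputable def cA (f : ℂ → ℂ) (z : ℂ) (j : ℕ) (ε : ℝ) : ℂ :=
  ∫ θ in (0:ℝ)..(2*π), f (circleMap z ε θ) * Complex.exp (-(j:ℂ) * θ * Complex.I)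

lemma cA_continuous (f : ℂ → ℂ) (hf : Continuous f) (z : ℂ) (j : ℕ) :
    Continuous (cA f z j) := by
  apply intervalIntegral.continuous_parametric_intervalIntegral_of_continuous'
  apply Continuous.mul
  · apply hf.comp
    simp only [circleMap]
    fun_prop
  · fun_prop

lemma cA_zero (f : ℂ → ℂ) (z : ℂ) (j : ℕ) :
    cA f z j 0 = if j = 0 then 2 * π * f z else 0 := by
  have h0 : ∀ θ : ℝ, circleMap z 0 θ = z := by intro θ; simp [circleMap]
  simp only [cA, h0]
  rcases eq_or_ne j 0 with hj | hj
  · simp [hj, mul_comm]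
  · rw [if_neg hj]
    have hc : (-(j:ℂ) * Complex.I) ≠ 0 := by
      simp [Complex.ext_iff, Nat.cast_eq_zero, hj]
    have : ∀ θ : ℝ, f z * Complex.exp (-(j:ℂ) * θ * Complex.I)
        = f z * Complex.exp ((-(j:ℂ) * Complex.I) * θ) := by
      intro θ; ring_nf
    simp only [this]
    rw [intervalIntegral.integral_const_mul, integral_exp_mul_complex hc]
    have h1 : Complex.exp (-(j:ℂ) * Complex.I * (2*π)) = 1 := by
      have h2 := Complex.exp_int_mul_two_pi_mul_I (-(j:ℤ))
      push_cast at h2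
      rw [← h2]; ring_nf
    push_cast
    rw [h1, mul_zero, Complex.exp_zero, sub_self, zero_div, mul_zero]

lemma cA_rec (z : ℂ) (f : ℂ → ℂ) (hf : ContDiff ℝ (⊤:ℕ∞) f) (j : ℕ) (ε : ℝ) :
    ((j:ℂ)+1) * cA f z (j+1) ε
      = (ε:ℂ) * cA (wderiv f) z j ε - (ε:ℂ) * cA (wcderiv f) z (j+2) ε := by
  set c : ℂ := -((j:ℂ)+1) * Complex.I with hc
  set γ : ℝ → ℂ := circleMap z ε with hγdef
  set G1 : ℝ → ℂ := fun θ => wderiv f (γ θ) * Complex.exp (-(j:ℂ) * θ * Complex.I) with hG1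
  set G2 : ℝ → ℂ := fun θ => wcderiv f (γ θ) * Complex.exp (-((j:ℂ)+2) * θ * Complex.I) with hG2
  set G3 : ℝ → ℂ := fun θ => f (γ θ) * Complex.exp (-((j:ℂ)+1) * θ * Complex.I) with hG3
  set F : ℝ → ℂ := fun θ => f (γ θ) * Complex.exp (c * θ) with hF
  set F' : ℝ → ℂ := fun θ =>
      (wderiv f (γ θ) * (circleMap 0 ε θ * Complex.I)
        + wcderiv f (γ θ) * (starRingEnd ℂ) (circleMap 0 ε θ * Complex.I))
        * Complex.exp (c * θ)
      + f (γ θ) * (Complex.exp (c * θ) * c) with hF'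
  have hD : ∀ θ : ℝ, HasDerivAt F (F' θ) θ := by
    intro θ
    have hγ : HasDerivAt γ (circleMap 0 ε θ * Complex.I) θ := hasDerivAt_circleMap z ε θ
    have hfd : HasFDerivAt f (fderiv ℝ f (γ θ)) (γ θ) :=
      (hf.differentiable (by simp) (γ θ)).hasFDerivAt
    have h1 : HasDerivAt (fun θ => f (γ θ))
        (fderiv ℝ f (γ θ) (circleMap 0 ε θ * Complex.I)) θ :=
      hfd.comp_hasDerivAt θ hγ
    have h2 : HasDerivAt (fun θ : ℝ => Complex.exp (c * θ))
        (Complex.exp (c * θ) * c) θ := by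
      have hin : HasDerivAt (fun y : ℂ => c * y) (c * 1) (θ:ℂ) :=
        (hasDerivAt_id ((θ:ℝ):ℂ)).const_mul c
      have := ((Complex.hasDerivAt_exp (c * (θ:ℂ))).comp (θ:ℂ) hin).comp_ofReal
      simpa using this
    have hD' := h1.mul h2
    rw [fderiv_apply_eq] at hD'
    exact hD' 
  have hcont : Continuous F' := by
    have hfc : Continuous f := hf.continuous
    have hwd : Continuous (wderiv f) := (wderiv_contDiff hf).continuous
    have hwc : Continuous (wcderiv f) := (wcderiv_contDiff hf).continuous
    have hγc : Continuous γ := continuous_circleMap z ε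
    have h0c : Continuous (circleMap 0 ε) := continuous_circleMap 0 ε
    have hconjC : Continuous fun w : ℂ => (starRingEnd ℂ) w := continuous_star
    fun_prop
  have hFTC : (∫ θ in (0:ℝ)..(2*π), F' θ) = F (2*π) - F 0 :=
    intervalIntegral.integral_eq_sub_of_hasDerivAt (fun θ _ => hD θ)
      (hcont.intervalIntegrable 0 (2*π))
  have hper : γ (2*π) = γ 0 := by
    have := periodic_circleMap z ε
    simpa using this 0
  have hexp1 : Complex.exp (c * ((2*π : ℝ):ℂ)) = 1 := by
    have h2 := Complex.exp_int_mul_two_pi_mul_I (-((j:ℤ)+1))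
    push_cast at h2
    rw [← h2, hc]; push_cast; ring_nf
  have hF0 : F (2*π) - F 0 = 0 := by
    simp only [F]
    rw [hper, hexp1]
    simp
  have hptwise : ∀ θ : ℝ, F' θ
      = Complex.I * ((ε:ℂ) * G1 θ - (ε:ℂ) * G2 θ - ((j:ℂ)+1) * G3 θ) := by
    intro θ
    have hcm : circleMap 0 ε θ = (ε:ℂ) * Complex.exp (θ * Complex.I) := by
      simp [circleMap]
    have hconj : (starRingEnd ℂ) (circleMap 0 ε θ * Complex.I)
        = -(ε:ℂ) * Complex.exp (-(θ:ℂ) * Complex.I) * Complex.I := by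
      rw [hcm]
      simp only [map_mul, Complex.conj_ofReal, Complex.conj_I, ← Complex.exp_conj]
      rw [show ((θ:ℂ)) * -Complex.I = -(θ:ℂ) * Complex.I from by ring]
      ring
    have hvw : Complex.exp ((θ:ℂ) * Complex.I) * Complex.exp (-(θ:ℂ) * Complex.I) = 1 := by
      rw [← Complex.exp_add, show (θ:ℂ) * Complex.I + -(θ:ℂ) * Complex.I = 0 from by ring,
        Complex.exp_zero]
    have e1 : Complex.exp (-(j:ℂ) * (θ:ℂ) * Complex.I)
        = Complex.exp (-(θ:ℂ) * Complex.I) ^ j := by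
      rw [← Complex.exp_nat_mul]; congr 1; ring
    have e2 : Complex.exp (-((j:ℂ)+2) * (θ:ℂ) * Complex.I)
        = Complex.exp (-(θ:ℂ) * Complex.I) ^ (j+2) := by
      rw [← Complex.exp_nat_mul]; congr 1; push_cast; ring
    have e3 : Complex.exp (-((j:ℂ)+1) * (θ:ℂ) * Complex.I)
        = Complex.exp (-(θ:ℂ) * Complex.I) ^ (j+1) := by
      rw [← Complex.exp_nat_mul]; congr 1; push_cast; ring
    have e4 : Complex.exp (c * (θ:ℂ))
        = Complex.exp (-(θ:ℂ) * Complex.I) ^ (j+1) := by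
      rw [← Complex.exp_nat_mul]; congr 1; rw [hc]; push_cast; ring
    simp only [F', G1, G2, G3]
    rw [hconj]
    simp only [hcm, e1, e2, e3, e4]
    simp only [hc]
    linear_combination (Complex.I * (ε:ℂ) * wderiv f (γ θ)
      * Complex.exp (-(θ:ℂ) * Complex.I) ^ j) * hvw
  have hint : ∀ h : ℂ → ℂ, Continuous h → ∀ k : ℕ,
      IntervalIntegrable (fun θ => h (γ θ) * Complex.exp (-(k:ℂ) * θ * Complex.I))
        MeasureTheory.volume 0 (2*π) := by
    intro h hh k
    apply Continuous.intervalIntegrable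
    have hγc : Continuous γ := continuous_circleMap z ε
    fun_prop
  have hiG1 : IntervalIntegrable G1 MeasureTheory.volume 0 (2*π) :=
    hint (wderiv f) (wderiv_contDiff hf).continuous j
  have hiG2 : IntervalIntegrable G2 MeasureTheory.volume 0 (2*π) := by
    have := hint (wcderiv f) (wcderiv_contDiff hf).continuous (j+2)
    simpa [G2] using this
  have hiG3 : IntervalIntegrable G3 MeasureTheory.volume 0 (2*π) := by
    have := hint f hf.continuous (j+1)
    simpa [G3] using this
  have hsplit : (∫ θ in (0:ℝ)..(2*π), F' θ)
      = Complex.I * ((ε:ℂ) * cA (wderiv f) z j ε - (ε:ℂ) * cA (wcderiv f) z (j+2) ε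
          - ((j:ℂ)+1) * cA f z (j+1) ε) := by
    have e1 : cA (wderiv f) z j ε = ∫ θ in (0:ℝ)..(2*π), G1 θ := by
      simp only [cA, G1]; rfl
    have e2 : cA (wcderiv f) z (j+2) ε = ∫ θ in (0:ℝ)..(2*π), G2 θ := by
      simp only [cA, G2]; push_cast; rfl
    have e3 : cA f z (j+1) ε = ∫ θ in (0:ℝ)..(2*π), G3 θ := by
      simp only [cA, G3]; push_cast; rfl
    rw [e1, e2, e3]
    simp only [hptwise]
    rw [intervalIntegral.integral_const_mul]
    congr 1
    rw [intervalIntegral.integral_sub ((hiG1.const_mul _).sub (hiG2.const_mul _))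
        (hiG3.const_mul _),
      intervalIntegral.integral_sub (hiG1.const_mul _) (hiG2.const_mul _),
      intervalIntegral.integral_const_mul, intervalIntegral.integral_const_mul,
      intervalIntegral.integral_const_mul]
  have hzero : (ε:ℂ) * cA (wderiv f) z j ε - (ε:ℂ) * cA (wcderiv f) z (j+2) ε
      - ((j:ℂ)+1) * cA f z (j+1) ε = 0 := by
    have h := hFTC
    rw [hF0, hsplit] at h
    have := mul_eq_zero.mp h
    rcases this with h' | h'
    · exact absurd h' Complex.I_ne_zero
    · exact h'
  linear_combination -hzero

lemma cA_tendsto (z : ℂ) : ∀ (m : ℕ) (f : ℂ → ℂ), ContDiff ℝ (⊤:ℕ∞) f → ∀ j : ℕ, m ≤ j →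
    Tendsto (fun ε : ℝ => ((ε:ℂ))⁻¹ ^ m * cA f z j ε) (𝓝[>] 0)
      (𝓝 (if j = m then 2 * π * wderiv^[m] f z / (Nat.factorial m) else 0)) := by
  intro m
  induction m with
  | zero =>
    intro f hf j _
    simp only [pow_zero, one_mul]
    have h0 : Tendsto (cA f z j) (𝓝[>] 0) (𝓝 (cA f z j 0)) :=
      ((cA_continuous f hf.continuous z j).tendsto 0).mono_left nhdsWithin_le_nhds
    rw [cA_zero] at h0
    convert h0 using 2
    split_ifs <;> simp
  | succ m ih =>
    intro f hf j hj
    obtain ⟨j', rfl⟩ : ∃ j', j = j' + 1 :=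
      ⟨j - 1, (Nat.succ_pred_eq_of_pos (lt_of_lt_of_le (Nat.succ_pos m) hj)).symm⟩
    have hj' : m ≤ j' := Nat.succ_le_succ_iff.mp hj
    have h1 := ih (wderiv f) (wderiv_contDiff hf) j' hj'
    have h2 := ih (wcderiv f) (wcderiv_contDiff hf) (j' + 2) (by omega)
    rw [if_neg (by omega)] at h2
    have hT : Tendsto (fun ε : ℝ => ((j':ℂ)+1)⁻¹ *
        ((ε:ℂ)⁻¹ ^ m * cA (wderiv f) z j' ε - (ε:ℂ)⁻¹ ^ m * cA (wcderiv f) z (j'+2) ε))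
        (𝓝[>] 0)
        (𝓝 (((j':ℂ)+1)⁻¹ *
          ((if j' = m then 2 * π * wderiv^[m] (wderiv f) z / (Nat.factorial m) else 0) - 0))) :=
      (h1.sub h2).const_mul _
    have hval : (if j' + 1 = m + 1 then
          2 * (π:ℂ) * wderiv^[m+1] f z / (Nat.factorial (m+1)) else 0)
        = ((j':ℂ)+1)⁻¹ *
          ((if j' = m then 2 * π * wderiv^[m] (wderiv f) z / (Nat.factorial m) else 0) - 0) := by
      rcases eq_or_ne j' m with h | h
      · subst h
        rw [if_pos rfl, if_pos rfl, Function.iterate_succ_apply, sub_zero, Nat.factorial_succ]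
        have hm : ((Nat.factorial j' : ℂ)) ≠ 0 :=
          Nat.cast_ne_zero.mpr (Nat.factorial_ne_zero j')
        have hm1 : ((j':ℂ) + 1) ≠ 0 := Nat.cast_add_one_ne_zero j'
        push_cast
        field_simp
      · rw [if_neg (by omega), if_neg h]; simp
    rw [hval]
    apply hT.congr'
    filter_upwards [self_mem_nhdsWithin] with ε hε
    have hε0 : (ε:ℂ) ≠ 0 := by
      exact_mod_cast ne_of_gt (show (0:ℝ) < ε from hε)
    have hj0 : ((j':ℂ)+1) ≠ 0 := Nat.cast_add_one_ne_zero j'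
    have hrec := cA_rec z f hf j' ε
    have hA : cA f z (j'+1) ε = ((j':ℂ)+1)⁻¹ *
        ((ε:ℂ) * cA (wderiv f) z j' ε - (ε:ℂ) * cA (wcderiv f) z (j'+2) ε) := by
      field_simp
      linear_combination hrec
    rw [hA]
    have hinv : (ε:ℂ)⁻¹ * ε = 1 := inv_mul_cancel₀ hε0
    linear_combination (-(((j':ℂ)+1)⁻¹ * (ε:ℂ)⁻¹ ^ m * (cA (wderiv f) z j' ε - cA (wcderiv f) z (j'+2) ε))) * hinv

/-- generalized Cauchy formula: for `g` smooth on a neighborhood of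
`z ∈ ℂ` and `n ≥ 1`,
`lim_{ε→0⁺} (1/(2π√−1)) ∮_{|v−z|=ε} g(v,v̄)/(v−z)ⁿ dv = ∂_z^{n−1} g(z,z̄)/(n−1)!`. -/
theorem generalized_cauchy_formula (z : ℂ) (g : ℂ → ℂ)
    (U : Set ℂ) (hU : U ∈ 𝓝 z) (hg : ContDiffOn ℝ (⊤ : ℕ∞) g U)
    (n : ℕ) (hn : 1 ≤ n) :
    Tendsto
      (fun ε : ℝ =>
        (2 * (π : ℂ) * Complex.I)⁻¹ * ∮ v in C(z, ε), g v / (v - z) ^ n)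
      (𝓝[>] 0)
      (𝓝 (wderiv^[n - 1] g z / (Nat.factorial (n - 1) : ℂ))) := by
  obtain ⟨m, rfl⟩ : ∃ m, n = m + 1 := ⟨n - 1, (Nat.succ_pred_eq_of_pos hn).symm⟩
  simp only [Nat.add_sub_cancel]
  -- choose a radius
  obtain ⟨r, hr0, hrU⟩ : ∃ r > 0, Metric.closedBall z r ⊆ interior U :=
    Metric.nhds_basis_closedBall.mem_iff.mp (interior_mem_nhds.mpr hU)
  set bump : ContDiffBump z := ⟨r/2, r, by positivity, by linarith⟩ with hbump
  set f : ℂ → ℂ := fun v => (bump v : ℝ) • g v with hfdef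
  have hfg : ∀ v ∈ Metric.closedBall z (r/2), f v = g v := by
    intro v hv
    simp only [f, bump.one_of_mem_closedBall hv, one_smul]
  have hsm : ContDiff ℝ (⊤:ℕ∞) f := by
    rw [← contDiffOn_univ]
    intro v _
    by_cases hv : v ∈ interior U
    · have hb : ContDiffAt ℝ (⊤:ℕ∞) (fun w => (bump w : ℝ)) v := bump.contDiff.contDiffAt
      have hga : ContDiffAt ℝ (⊤:ℕ∞) g v :=
        (hg.contDiffAt (mem_nhds_iff.mpr ⟨interior U, interior_subset,
          isOpen_interior, hv⟩)).of_le (by simp)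
      exact (hb.smul hga).contDiffWithinAt
    · have hv' : v ∉ Metric.closedBall z r := fun h => hv (hrU h)
      have hopen : IsOpen (Metric.closedBall z r)ᶜ := (Metric.isClosed_closedBall).isOpen_compl
      have h0 : f =ᶠ[𝓝 v] (fun _ => (0:ℂ)) := by
        filter_upwards [hopen.mem_nhds hv'] with w hw
        simp only [f, bump.zero_of_le_dist (not_lt.mp fun h => hw (Metric.mem_closedBall.mpr h.le)),
          zero_smul]
      exact ((contDiffAt_const (c := (0:ℂ))).congr_of_eventuallyEq h0).contDiffWithinAt
  have hfg_nhds : f =ᶠ[𝓝 z] g := by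
    filter_upwards [Metric.closedBall_mem_nhds z (by positivity : (0:ℝ) < r/2)] with w hw
    exact hfg w hw
  rw [show wderiv^[m] g z = wderiv^[m] f z from (wderiv_iterate_congr hfg_nhds m).symm]
  have hmain := cA_tendsto z m f hsm m le_rfl
  rw [if_pos rfl] at hmain
  have hT := hmain.const_mul ((2 * (π:ℂ))⁻¹)
  have hval : (2 * (π:ℂ))⁻¹ * (2 * π * wderiv^[m] f z / (Nat.factorial m)) =
      wderiv^[m] f z / (Nat.factorial m) := by
    have hπ : ((π:ℂ)) ≠ 0 := by exact_mod_cast Real.pi_ne_zero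
    field_simp
  rw [hval] at hT
  apply hT.congr'
  filter_upwards [Ioo_mem_nhdsGT_of_mem (Set.mem_Ico.mpr ⟨le_rfl, by positivity⟩ :
      (0:ℝ) ∈ Set.Ico 0 (r/2))] with ε hε
  obtain ⟨hε0, hεr⟩ := hε
  have hε0' : (ε:ℂ) ≠ 0 := by exact_mod_cast ne_of_gt hε0
  -- replace g by f in the circle integral
  have hcirc : (∮ v in C(z, ε), g v / (v - z) ^ (m+1))
      = ∮ v in C(z, ε), f v / (v - z) ^ (m+1) := by
    apply circleIntegral.integral_congr hε0.le
    intro v hv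
    have : v ∈ Metric.closedBall z (r/2) := by
      rw [Metric.mem_sphere] at hv
      exact Metric.mem_closedBall.mpr (by linarith [hv.le])
    dsimp only
    rw [hfg v this]
  rw [hcirc]
  -- unfold the circle integral
  have hunfold : (∮ v in C(z, ε), f v / (v - z) ^ (m+1))
      = Complex.I * ((ε:ℂ)⁻¹ ^ m * cA f z m ε) := by
    rw [circleIntegral]
    rw [show Complex.I * ((ε:ℂ)⁻¹ ^ m * cA f z m ε)
        = ∫ θ in (0:ℝ)..(2*π), Complex.I * ((ε:ℂ)⁻¹ ^ m
            * (f (circleMap z ε θ) * Complex.exp (-(m:ℂ) * θ * Complex.I))) from by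
      rw [cA, ← intervalIntegral.integral_const_mul, ← intervalIntegral.integral_const_mul]]
    apply intervalIntegral.integral_congr
    intro θ _
    dsimp only
    have hw : Complex.exp ((θ:ℂ) * Complex.I) ≠ 0 := Complex.exp_ne_zero _
    have hcm : circleMap 0 ε θ = (ε:ℂ) * Complex.exp (θ * Complex.I) := by simp [circleMap]
    have hem : Complex.exp (-(m:ℂ) * θ * Complex.I)
        = (Complex.exp ((θ:ℂ) * Complex.I) ^ m)⁻¹ := by
      rw [← Complex.exp_nat_mul, ← Complex.exp_neg]; congr 1; ring
    rw [deriv_circleMap, circleMap_sub_center, smul_eq_mul, hcm, hem]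
    rw [mul_pow]
    field_simp
    have hp : (ε:ℂ) ^ m * (ε:ℂ)⁻¹ ^ m = 1 := by rw [← mul_pow, mul_inv_cancel₀ hε0', one_pow]
    linear_combination (-((ε:ℂ) * Complex.exp ((θ:ℂ) * Complex.I) * Complex.exp ((θ:ℂ) * Complex.I) ^ m * f (circleMap z ε θ))) * hp
  rw [hunfold]
  -- final algebra
  field_simp
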